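/- Let C be a satisfiable set of conditionals. Then the ranked union of the (finite) set Mod(C) of all ranked models of C is the unique ⪯_LM-minimum element of Mod(C): it is a ranked model of C, it satisfies R ⪯_LM R' for every ranked model R' of C, and every ranked model of C with this latter property is equal to it. -/
import Mathlib


attribute [local instance] Classical.propDecidable

universe u

/-- Sentences of Propositional Typicality Logic over atoms `P`. -/
inductive PTL (P : Type u) : Type u
  | atom : P → PTL P
  | neg  : PTL P → PTL P
  | conj : PTL P → PTL P → PTL P
  | top  : PTL P
  | bot  : PTL P
  | typ  : PTL P → PTL P

namespace PTL

/-- Material implication, defined from `¬` and `∧`. -/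
def impl {P : Type u} (a b : PTL P) : PTL P := neg (conj a (neg b))

/-- Disjunction, defined from `¬` and `∧`. -/
def disj {P : Type u} (a b : PTL P) : PTL P := neg (conj (neg a) (neg b))

/-- Purely propositional sentences: no occurrence of the typicality operator. -/
def IsProp {P : Type u} : PTL P → Prop
  | atom _ => True
  | neg a => IsProp a
  | conj a b => IsProp a ∧ IsProp b
  | top => True
  | bot => True
  | typ _ => False

end PTL

/-- Propositional valuations. -/
abbrev Val (P : Type u) := P → Bool

/-- Satisfaction of a PTL sentence by a valuation, relative to a ranking
function `rho : Val P → ℕ∞`. -/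
def satR {P : Type u} (rho : Val P → ℕ∞) : Val P → PTL P → Prop
  | v, PTL.atom p => v p = true
  | v, PTL.neg a => ¬ satR rho v a
  | v, PTL.conj a b => satR rho v a ∧ satR rho v b
  | _, PTL.top => True
  | _, PTL.bot => False
  | v, PTL.typ a => satR rho v a ∧ ∀ v', rho v' < rho v → ¬ satR rho v' a

/-- The convexity property of ranking functions. -/
def RkConvex {P : Type u} (rho : Val P → ℕ∞) : Prop :=
  ∀ (v : Val P) (i : ℕ), rho v = (i : ℕ∞) → ∀ j : ℕ, j < i → ∃ v', rho v' = (j : ℕ∞)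

/-- A ranked interpretation: a convex ranking function on valuations. -/
structure RankedInterp (P : Type u) where
  rk : Val P → ℕ∞
  convex : RkConvex rk

/-- `rho` is a ranked model of `a`: every possible valuation satisfies `a`. -/
def modelsR {P : Type u} (rho : Val P → ℕ∞) (a : PTL P) : Prop :=
  ∀ v, rho v < ⊤ → satR rho v a

/-- `R ⊨ a`. -/
def RankedInterp.models {P : Type u} (R : RankedInterp P) (a : PTL P) : Prop :=
  modelsR R.rk a

/-- `R` is a ranked model of the knowledge base `K`. -/
def modelsSet {P : Type u} (R : RankedInterp P) (K : Set (PTL P)) : Prop :=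
  ∀ a ∈ K, R.models a

/-- Ranked entailment consequences of `K`. -/
def Cn0 {P : Type u} (K : Set (PTL P)) : Set (PTL P) :=
  {a | ∀ R : RankedInterp P, modelsSet R K → R.models a}

/-- `rho` satisfies the conditional `a |~ b`: every `≺`-minimal possible
`a`-valuation satisfies `b`. -/
def condSatRho {P : Type u} (rho : Val P → ℕ∞) (a b : PTL P) : Prop :=
  ∀ v, rho v < ⊤ → satR rho v a →
    (∀ u, rho u < ⊤ → satR rho u a → ¬ rho u < rho v) → satR rho v b

/-- The cell of rank `i` of a ranking function. -/
def cell {P : Type u} (rho : Val P → ℕ∞) (i : ℕ∞) : Set (Val P) :=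
  {u | rho u = i}

/-- The LM preference `⪯_LM` on ranking functions: either all cells coincide,
or the cell of the first differing (finite) rank shrinks. -/
def LMle {P : Type u} (rho1 rho2 : Val P → ℕ∞) : Prop :=
  (∀ i : ℕ∞, cell rho1 i = cell rho2 i) ∨
  ∃ j : ℕ, (∀ k : ℕ, k < j → cell rho1 (k : ℕ∞) = cell rho2 (k : ℕ∞)) ∧
    cell rho1 (j : ℕ∞) ≠ cell rho2 (j : ℕ∞) ∧ cell rho2 (j : ℕ∞) ⊆ cell rho1 (j : ℕ∞)

/-- Strict LM preference. -/
def LMlt {P : Type u} (rho1 rho2 : Val P → ℕ∞) : Prop :=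
  LMle rho1 rho2 ∧ ¬ LMle rho2 rho1

/-- Pointwise minimum rank over a set of ranked interpretations. -/
noncomputable def munion {P : Type u} (Ms : Set (RankedInterp P)) (v : Val P) : ℕ∞ :=
  ⨅ R ∈ Ms, R.rk v

/-- The ranked union of a set of ranked interpretations: finite minimum ranks
are relabelled order-isomorphically onto an initial segment of `ℕ`. -/
noncomputable def rankedUnion {P : Type u} (Ms : Set (RankedInterp P)) : Val P → ℕ∞ :=
  fun v =>
    if munion Ms v = ⊤ then ⊤
    else (({x : ℕ∞ | (∃ u, munion Ms u = x) ∧ x < munion Ms v}.ncard : ℕ) : ℕ∞)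

/-- `Mod(C)`: the set of all ranked models of a set of conditionals `C`. -/
def ModC {P : Type u} (C : Set (PTL P × PTL P)) : Set (RankedInterp P) :=
  {R | ∀ c ∈ C, condSatRho R.rk c.1 c.2}

/-! ### Auxiliary lemmas -/

section Aux

variable {P : Type u}

lemma satR_prop_iff (rho rho' : Val P → ℕ∞) (v : Val P) :
    ∀ (a : PTL P), a.IsProp → (satR rho v a ↔ satR rho' v a) := by
  intro a
  induction a with
  | atom p => intro _; exact Iff.rfl
  | neg a ih => intro h; exact not_congr (ih h)
  | conj a b iha ihb => intro h; exact and_congr (iha h.1) (ihb h.2)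
  | top => intro _; exact Iff.rfl
  | bot => intro _; exact Iff.rfl
  | typ a ih => intro h; exact h.elim

lemma finset_exists_filter_lt_card {α : Type*} [LinearOrder α] (s : Finset α) (j : ℕ)
    (hj : j < s.card) : ∃ x ∈ s, ({y : α | y ∈ s ∧ y < x}).ncard = j := by
  classical
  set f : α → ℕ := fun x => (s.filter (fun y => y < x)).card with hf
  have hmono : ∀ x ∈ s, ∀ y ∈ s, x < y → f x < f y := by
    intro x hx y hy hxy
    apply Finset.card_lt_card
    refine (Finset.ssubset_iff_of_subset ?_).2 ⟨x, ?_, ?_⟩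
    · intro z hz
      rw [Finset.mem_filter] at hz ⊢
      exact ⟨hz.1, lt_trans hz.2 hxy⟩
    · exact Finset.mem_filter.2 ⟨hx, hxy⟩
    · intro hc; exact absurd (Finset.mem_filter.1 hc).2 (lt_irrefl x)
  have hlt : ∀ x ∈ s, f x < s.card := by
    intro x hx
    apply Finset.card_lt_card
    refine (Finset.ssubset_iff_of_subset (Finset.filter_subset _ _)).2 ⟨x, hx, ?_⟩
    intro hc; exact absurd (Finset.mem_filter.1 hc).2 (lt_irrefl x)
  have hinj : Set.InjOn f ↑s := by
    intro x hx y hy hxy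
    by_contra hne
    rcases lt_or_gt_of_ne hne with h | h
    · exact absurd hxy (Nat.ne_of_lt (hmono x hx y hy h))
    · exact absurd hxy.symm (Nat.ne_of_lt (hmono y hy x hx h))
  have hcard : (s.image f).card = s.card := Finset.card_image_of_injOn hinj
  have hsub : s.image f ⊆ Finset.range s.card := by
    intro k hk
    obtain ⟨x, hx, rfl⟩ := Finset.mem_image.1 hk
    exact Finset.mem_range.2 (hlt x hx)
  have heq : s.image f = Finset.range s.card :=
    Finset.eq_of_subset_of_card_le hsub (by rw [hcard, Finset.card_range])
  have hjmem : j ∈ s.image f := by rw [heq]; exact Finset.mem_range.2 hj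
  obtain ⟨x, hx, hfx⟩ := Finset.mem_image.1 hjmem
  refine ⟨x, hx, ?_⟩
  simp only [hf] at hfx
  rw [← hfx, ← Set.ncard_coe_finset]
  congr 1
  ext y
  simp [Finset.mem_filter]

lemma munion_le (Ms : Set (RankedInterp P)) {R : RankedInterp P} (hR : R ∈ Ms) (v : Val P) :
    munion Ms v ≤ R.rk v := by
  exact iInf₂_le R hR

lemma munion_attained (Ms : Set (RankedInterp P)) (hne : Ms.Nonempty) (v : Val P) :
    ∃ R ∈ Ms, R.rk v = munion Ms v := by
  set S : Set ℕ∞ := {x | ∃ R ∈ Ms, R.rk v = x} with hS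
  obtain ⟨R₀, hR₀⟩ := hne
  have hSne : S.Nonempty := ⟨R₀.rk v, R₀, hR₀, rfl⟩
  obtain ⟨x, hxS, hxmin⟩ := (wellFounded_lt (α := ℕ∞)).has_min S hSne
  obtain ⟨R, hR, hRx⟩ := hxS
  have h1 : munion Ms v ≤ x := hRx ▸ munion_le Ms hR v
  have h2 : x ≤ munion Ms v :=
    le_iInf₂ fun R' hR' => not_lt.1 (hxmin (R'.rk v) ⟨R', hR', rfl⟩)
  exact ⟨R, hR, hRx.trans (le_antisymm h1 h2).symm⟩

variable [Fintype P]

lemma range_munion_finite (Ms : Set (RankedInterp P)) :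
    {x : ℕ∞ | ∃ u, munion Ms u = x}.Finite :=
  Set.finite_range (munion Ms)

lemma rankedUnion_eq_of_ne_top (Ms : Set (RankedInterp P)) {v : Val P}
    (h : munion Ms v ≠ ⊤) :
    rankedUnion Ms v =
      (({x : ℕ∞ | (∃ u, munion Ms u = x) ∧ x < munion Ms v}.ncard : ℕ) : ℕ∞) := by
  rw [rankedUnion, if_neg h]

lemma Sfin (Ms : Set (RankedInterp P)) (v : Val P) :
    ({x : ℕ∞ | (∃ u, munion Ms u = x) ∧ x < munion Ms v}).Finite :=
  (range_munion_finite Ms).subset fun x hx => hx.1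

lemma rankedUnion_ne_top_iff (Ms : Set (RankedInterp P)) (v : Val P) :
    rankedUnion Ms v ≠ ⊤ ↔ munion Ms v ≠ ⊤ := by
  constructor
  · intro h hc; rw [rankedUnion, if_pos hc] at h; exact h rfl
  · intro h; rw [rankedUnion_eq_of_ne_top Ms h]; exact ENat.coe_ne_top _

lemma rankedUnion_le_munion (Ms : Set (RankedInterp P)) (v : Val P) :
    rankedUnion Ms v ≤ munion Ms v := by
  rcases eq_or_ne (munion Ms v) ⊤ with h | h
  · rw [h]; exact le_top
  · obtain ⟨n, hn⟩ := WithTop.ne_top_iff_exists.1 h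
    rw [rankedUnion_eq_of_ne_top Ms h]
    have hsub : {x : ℕ∞ | (∃ u, munion Ms u = x) ∧ x < munion Ms v} ⊆
        (fun k : ℕ => (k : ℕ∞)) '' Set.Iio n := by
      intro x hx
      have hxlt : x < (n : ℕ∞) := lt_of_lt_of_eq hx.2 hn.symm
      obtain ⟨k, hk⟩ := WithTop.ne_top_iff_exists.1 (ne_top_of_lt hxlt)
      exact ⟨k, Nat.cast_lt.1 (hk ▸ hxlt), hk⟩
    have hIio : (Set.Iio n : Set ℕ) = ↑(Finset.range n) := by
      ext k; simp [Finset.mem_range]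
    have himg : ((fun k : ℕ => (k : ℕ∞)) '' Set.Iio n).ncard = n := by
      rw [Set.ncard_image_of_injective _ Nat.cast_injective, hIio,
        Set.ncard_coe_finset, Finset.card_range]
    have hfin : ((fun k : ℕ => (k : ℕ∞)) '' Set.Iio n).Finite :=
      (Set.finite_Iio n).image _
    have hle := Set.ncard_le_ncard hsub hfin
    rw [himg] at hle
    calc (({x : ℕ∞ | (∃ u, munion Ms u = x) ∧ x < munion Ms v}.ncard : ℕ) : ℕ∞)
        ≤ (n : ℕ∞) := by exact_mod_cast hle
      _ = munion Ms v := hn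

lemma rankedUnion_lt_of_lt (Ms : Set (RankedInterp P)) {u v : Val P}
    (h : munion Ms u < munion Ms v) : rankedUnion Ms u < rankedUnion Ms v := by
  have hu : munion Ms u ≠ ⊤ := ne_top_of_lt h
  rcases eq_or_ne (munion Ms v) ⊤ with hv | hv
  · have h1 : rankedUnion Ms v = ⊤ := by rw [rankedUnion, if_pos hv]
    have h2 : rankedUnion Ms u ≠ ⊤ := (rankedUnion_ne_top_iff Ms u).2 hu
    rw [h1]; exact lt_top_iff_ne_top.2 h2
  · rw [rankedUnion_eq_of_ne_top Ms hu, rankedUnion_eq_of_ne_top Ms hv]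
    rw [Nat.cast_lt]
    apply Set.ncard_lt_ncard _ (Sfin Ms v)
    refine (Set.ssubset_iff_of_subset ?_).2 ⟨munion Ms u, ⟨⟨u, rfl⟩, h⟩, ?_⟩
    · intro x hx; exact ⟨hx.1, lt_trans hx.2 h⟩
    · intro hc; exact absurd hc.2 (lt_irrefl _)

lemma cell_eq_iff {rho1 rho2 : Val P → ℕ∞} (h : ∀ i : ℕ∞, cell rho1 i = cell rho2 i) :
    rho1 = rho2 := by
  funext v
  have hv : v ∈ cell rho1 (rho1 v) := rfl
  rw [h (rho1 v)] at hv
  exact hv.symm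

lemma LMle_of_pointwise_le {rho1 rho2 : Val P → ℕ∞} (h : ∀ v, rho1 v ≤ rho2 v) :
    LMle rho1 rho2 := by
  by_cases hall : ∀ i : ℕ∞, cell rho1 i = cell rho2 i
  · exact Or.inl hall
  · have hnat : ∃ j : ℕ, cell rho1 (j : ℕ∞) ≠ cell rho2 (j : ℕ∞) := by
      by_contra hc
      push_neg at hc
      apply hall
      intro i
      induction i using WithTop.recTopCoe with
      | top =>
        ext u
        simp only [cell, Set.mem_setOf_eq]
        constructor
        · intro h1
          by_contra h2
          obtain ⟨k, hk⟩ := WithTop.ne_top_iff_exists.1 h2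
          have : u ∈ cell rho2 (k : ℕ∞) := hk.symm
          rw [← hc k] at this
          exact absurd h1 (by rw [show rho1 u = (k:ℕ∞) from this]; exact ENat.coe_ne_top k)
        · intro h1
          by_contra h2
          obtain ⟨k, hk⟩ := WithTop.ne_top_iff_exists.1 h2
          have : u ∈ cell rho1 (k : ℕ∞) := hk.symm
          rw [hc k] at this
          exact absurd h1 (by rw [show rho2 u = (k:ℕ∞) from this]; exact ENat.coe_ne_top k)
      | coe k => exact hc k
    right
    refine ⟨Nat.find hnat, ?_, Nat.find_spec hnat, ?_⟩
    · intro k hk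
      by_contra hc
      exact Nat.find_min hnat hk hc
    · intro u hu
      have hu2 : rho2 u = (Nat.find hnat : ℕ∞) := hu
      have hle : rho1 u ≤ (Nat.find hnat : ℕ∞) := hu2 ▸ h u
      obtain ⟨k, hk⟩ := WithTop.ne_top_iff_exists.1
        (ne_top_of_le_ne_top (ENat.coe_ne_top _) hle)
      have hkle : k ≤ Nat.find hnat := Nat.cast_le.1 (hk ▸ hle)
      rcases lt_or_eq_of_le hkle with hklt | hkeq
      · exfalso
        have hcells : cell rho1 (k : ℕ∞) = cell rho2 (k : ℕ∞) := by
          by_contra hc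
          exact Nat.find_min hnat hklt hc
        have : u ∈ cell rho1 (k : ℕ∞) := hk.symm
        rw [hcells] at this
        have : rho2 u = (k : ℕ∞) := this
        rw [hu2] at this
        exact absurd (Nat.cast_injective this) (Nat.ne_of_gt hklt)
      · show rho1 u = (Nat.find hnat : ℕ∞)
        rw [← hk, hkeq]
        rfl

lemma cells_eq_of_LMle_LMle {rho1 rho2 : Val P → ℕ∞} (h1 : LMle rho1 rho2)
    (h2 : LMle rho2 rho1) : ∀ i : ℕ∞, cell rho1 i = cell rho2 i := by
  rcases h1 with hall | ⟨j1, hlt1, hne1, hsub1⟩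
  · exact hall
  rcases h2 with hall | ⟨j2, hlt2, hne2, hsub2⟩
  · exact fun i => (hall i).symm
  exfalso
  have hj : j1 = j2 := by
    rcases lt_trichotomy j1 j2 with h | h | h
    · exact absurd (hlt2 j1 h).symm hne1
    · exact h
    · exact absurd (hlt1 j2 h).symm hne2
  subst hj
  exact hne1 (Set.Subset.antisymm (hsub2) (hsub1))

end Aux
/-- the ranked union of all ranked models of a satisfiable set
of conditionals `C` is the unique `⪯_LM`-minimum element of `Mod(C)`: it is a
ranked model of `C`, it is `⪯_LM`-below every ranked model of `C`, and any
ranked model of `C` with that property equals it. -/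

theorem ptl_ranked_union_LM_minimum {P : Type u} [Fintype P] [DecidableEq P]
    (C : Set (PTL P × PTL P)) (hprop : ∀ c ∈ C, c.1.IsProp ∧ c.2.IsProp)
    (hsat : ∃ R : RankedInterp P, (∃ v, R.rk v < ⊤) ∧
      ∀ c ∈ C, condSatRho R.rk c.1 c.2) :
    RkConvex (rankedUnion (ModC C)) ∧
    (∀ c ∈ C, condSatRho (rankedUnion (ModC C)) c.1 c.2) ∧
    (∀ R ∈ ModC C, LMle (rankedUnion (ModC C)) R.rk) ∧
    (∀ R ∈ ModC C, (∀ R' ∈ ModC C, LMle R.rk R'.rk) →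
      R.rk = rankedUnion (ModC C)) := by
  classical
  obtain ⟨R₀, ⟨v₀, hv₀⟩, hR₀⟩ := hsat
  have hne : (ModC C).Nonempty := ⟨R₀, hR₀⟩
  set Ms := ModC C with hMsdef
  have hconv : RkConvex (rankedUnion Ms) := by
    intro v i hvi j hj
    have hmv : munion Ms v ≠ ⊤ := by
      intro h
      simp only [rankedUnion, if_pos h] at hvi
      exact (ENat.coe_ne_top i) hvi.symm
    rw [rankedUnion_eq_of_ne_top Ms hmv] at hvi
    have hcard : ({x : ℕ∞ | (∃ u, munion Ms u = x) ∧ x < munion Ms v}).ncard = i :=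
      Nat.cast_injective hvi
    have hfin := Sfin Ms v
    obtain ⟨x, hxS, hxcard⟩ := finset_exists_filter_lt_card hfin.toFinset j
      (by rw [← Set.ncard_eq_toFinset_card _ hfin, hcard]; exact hj)
    rw [Set.Finite.mem_toFinset] at hxS
    obtain ⟨⟨v', hv'⟩, hxlt⟩ := hxS
    refine ⟨v', ?_⟩
    have hx_ne : munion Ms v' ≠ ⊤ := by rw [hv']; exact ne_top_of_lt hxlt
    rw [rankedUnion_eq_of_ne_top Ms hx_ne]
    have hSeq : {y : ℕ∞ | (∃ u, munion Ms u = y) ∧ y < munion Ms v'} =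
        {y : ℕ∞ | y ∈ hfin.toFinset ∧ y < x} := by
      ext y
      simp only [Set.mem_setOf_eq, Set.Finite.mem_toFinset]
      constructor
      · intro hy
        have hylt : y < x := lt_of_lt_of_eq hy.2 hv'
        exact ⟨⟨hy.1, lt_trans hylt hxlt⟩, hylt⟩
      · intro hy
        exact ⟨hy.1.1, lt_of_lt_of_eq hy.2 hv'.symm⟩
    rw [hSeq, hxcard]
  have hmodels : ∀ c ∈ C, condSatRho (rankedUnion Ms) c.1 c.2 := by
    intro c hc v hvlt hva hmin
    obtain ⟨ha, hb⟩ := hprop c hc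
    have hmv : munion Ms v ≠ ⊤ :=
      (rankedUnion_ne_top_iff Ms v).1 (ne_top_of_lt hvlt)
    obtain ⟨R, hR, hRv⟩ := munion_attained Ms hne v
    have hminm : ∀ u, munion Ms u < ⊤ → satR (rankedUnion Ms) u c.1 →
        ¬ munion Ms u < munion Ms v := by
      intro u hu hau hltm
      have h1 : rankedUnion Ms u < rankedUnion Ms v := rankedUnion_lt_of_lt Ms hltm
      have h2 : rankedUnion Ms u < ⊤ :=
        lt_top_iff_ne_top.2 ((rankedUnion_ne_top_iff Ms u).2 (ne_top_of_lt hu))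
      exact hmin u h2 hau h1
    have hRc : condSatRho R.rk c.1 c.2 := hR c hc
    have hRvlt : R.rk v < ⊤ := by rw [hRv]; exact lt_top_iff_ne_top.2 hmv
    have hvaR : satR R.rk v c.1 := (satR_prop_iff (rankedUnion Ms) R.rk v c.1 ha).1 hva
    have hminR : ∀ u, R.rk u < ⊤ → satR R.rk u c.1 → ¬ R.rk u < R.rk v := by
      intro u hu hau hltR
      have hmu : munion Ms u ≤ R.rk u := munion_le Ms hR u
      have hmm : munion Ms u < munion Ms v := lt_of_le_of_lt hmu (lt_of_lt_of_eq hltR hRv)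
      exact hminm u (lt_of_le_of_lt hmu hu)
        ((satR_prop_iff R.rk (rankedUnion Ms) u c.1 ha).1 hau) hmm
    exact (satR_prop_iff R.rk (rankedUnion Ms) v c.2 hb).1 (hRc v hRvlt hvaR hminR)
  have hpt : ∀ R ∈ Ms, ∀ v, rankedUnion Ms v ≤ R.rk v := fun R hR v =>
    le_trans (rankedUnion_le_munion Ms v) (munion_le Ms hR v)
  have hLM : ∀ R ∈ Ms, LMle (rankedUnion Ms) R.rk := fun R hR =>
    LMle_of_pointwise_le (hpt R hR)
  refine ⟨hconv, hmodels, hLM, ?_⟩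
  intro R hR hRmin
  have hstar : (⟨rankedUnion Ms, hconv⟩ : RankedInterp P) ∈ Ms := hmodels
  have h1 : LMle R.rk (rankedUnion Ms) := hRmin _ hstar
  have h2 : LMle (rankedUnion Ms) R.rk := hLM R hR
  exact (cell_eq_iff (cells_eq_of_LMle_LMle h2 h1)).symm
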